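/- arXiv:2508.04555 — 2 statements merged into one kernel-verified Lean document; each statement's English description precedes it below -/
import Mathlib

section
/- Let C be a pure k-decomposable simplicial complex with facets F_1,...,F_t. Then there exists an ordering F_1,...,F_t of the facets such that for every 1 ≤ i ≤ t, the subcomplex generated by F_1,...,F_i is k-decomposable. -/
open Finset

variable {V : Type*} [DecidableEq V]

/-- A simplicial complex: a finite collection of finite faces closed under subsets. -/
def IsComplex (C : Finset (Finset V)) : Prop :=
  ∀ F ∈ C, ∀ G, G ⊆ F → G ∈ C

/-- `F` is a facet (maximal face) of `C`. -/
def IsFacet (C : Finset (Finset V)) (F : Finset V) : Prop :=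
  F ∈ C ∧ ∀ G ∈ C, F ⊆ G → F = G

/-- `C` is pure of dimension `d`: all facets have cardinality `d+1`. -/
def IsPure (C : Finset (Finset V)) (d : ℕ) : Prop :=
  ∀ F, IsFacet C F → F.card = d + 1

/-- The deletion of a face `F`: all faces not containing `F`. -/
def del (C : Finset (Finset V)) (F : Finset V) : Finset (Finset V) :=
  C.filter (fun G => ¬ F ⊆ G)

/-- The link of a face `F`. -/
def lk (C : Finset (Finset V)) (F : Finset V) : Finset (Finset V) :=
  C.filter (fun G => G ∩ F = ∅ ∧ G ∪ F ∈ C)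

/-- The simplicial complex generated by a collection of faces. -/
def gen (S : Finset (Finset V)) : Finset (Finset V) :=
  S.biUnion Finset.powerset

/-- `C` is a (full) simplex. -/
def IsSimplexCx (C : Finset (Finset V)) : Prop :=
  ∃ F : Finset V, C = F.powerset

/-- `F` is a shedding face of the pure `d`-dimensional complex `C`. -/
def Shedding (C : Finset (Finset V)) (d : ℕ) (F : Finset V) : Prop :=
  F ∈ C ∧ IsPure (del C F) d

/-- `k`-decomposability (Provan–Billera): a simplex, or there is a shedding face `F`
with `dim F ≤ k` whose deletion and link are again `k`-decomposable. -/
inductive Decomp : ℕ → Finset (Finset V) → Prop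
  | simplex (k : ℕ) (C : Finset (Finset V)) : IsSimplexCx C → Decomp k C
  | shed (k : ℕ) (C : Finset (Finset V)) (F : Finset V) (d : ℕ) :
      F ∈ C → F.Nonempty → F.card ≤ k + 1 → IsPure C d → IsPure (del C F) d →
      Decomp k (del C F) → Decomp k (lk C F) → Decomp k C

/-- The 1-dimensional skeleton of a complex, as a simple graph. -/
def skel (C : Finset (Finset V)) : SimpleGraph V where
  Adj x y := x ≠ y ∧ ({x, y} : Finset V) ∈ C
  symm := by
    constructor
    rintro x y ⟨hxy, hm⟩
    exact ⟨hxy.symm, by rwa [Finset.pair_comm]⟩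
  loopless := ⟨fun x h => h.1 rfl⟩

/-- A shelling of a pure `d`-dimensional complex: an ordering of the facets such that
each facet meets the union of the previous ones in a pure `(d-1)`-dimensional complex. -/
def IsShelling (C : Finset (Finset V)) (d : ℕ) (L : List (Finset V)) : Prop :=
  L.Nodup ∧ (∀ F, IsFacet C F ↔ F ∈ L) ∧
  ∀ i : ℕ, 1 ≤ i → ∀ h : i < L.length,
    IsPure (gen (L.take i).toFinset ∩ (L.get ⟨i, h⟩).powerset) (d - 1)

open scoped Classical in
/-- `full^d(G)`: the pure `d`-dimensional complex generated by all `(d+1)`-cliques of `G`. -/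
noncomputable def fullC [Fintype V] (d : ℕ) (G : SimpleGraph V) : Finset (Finset V) :=
  gen ((Finset.univ.powerset).filter fun s => G.IsClique (↑s : Set V) ∧ s.card = d + 1)

open scoped Classical in
/-- All `(d+1)`-cliques of `G` containing the set `e`. -/
noncomputable def cliquesWith [Fintype V] (d : ℕ) (G : SimpleGraph V) (e : Finset V) :
    Finset (Finset V) :=
  (Finset.univ.powerset).filter fun s => G.IsClique (↑s : Set V) ∧ s.card = d + 1 ∧ e ⊆ s

/-- `G^H`: join every vertex of `H` to every other vertex. -/
def coneGraph (G : SimpleGraph V) (H : Finset V) : SimpleGraph V where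
  Adj x y := x ≠ y ∧ (G.Adj x y ∨ x ∈ H ∨ y ∈ H)
  symm := by
    constructor
    rintro x y ⟨hxy, h⟩
    refine ⟨hxy.symm, ?_⟩
    rcases h with h | h | h
    · exact Or.inl (G.adj_symm h)
    · exact Or.inr (Or.inr h)
    · exact Or.inr (Or.inl h)
  loopless := ⟨fun x h => h.1 rfl⟩

/-- The graph `G` together with the extra edge `ab`. -/
def addEdge (G : SimpleGraph V) (a b : V) : SimpleGraph V :=
  G ⊔ SimpleGraph.fromEdgeSet {s(a, b)}

/-- `C` is fully coned with respect to `H`: every vertex of `H` is adjacent to every other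
vertex of `skel C`, and every `(d+1)`-clique of `skel C` is a facet of `C`. -/
def FullyConed (C : Finset (Finset V)) (d : ℕ) (H : Finset V) : Prop :=
  (∀ h ∈ H, ∀ v : V, ({v} : Finset V) ∈ C → v ≠ h → (skel C).Adj h v) ∧
  (∀ s : Finset V, (skel C).IsClique (↑s : Set V) → s.card = d + 1 → IsFacet C s)

/-! Induct on the decomposition. If `F` sheds `C`, list the facets of `del C F` in their
inductive order, followed by the cones `H ∪ F` over the facets `H` of `lk C F` in theirs. A
prefix that reaches into the second block generates a complex in which `F` is still a shedding
face: its deletion is all of `del C F`, and its link is generated by the corresponding prefix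
of the ordering of `lk C F`. -/

lemma List.toFinset_map {α β : Type*} [DecidableEq α] [DecidableEq β] (f : α → β)
    (l : List α) : (l.map f).toFinset = l.toFinset.image f := by
  ext
  simp

lemma mem_gen {S : Finset (Finset V)} {G : Finset V} : G ∈ gen S ↔ ∃ s ∈ S, G ⊆ s := by
  simp [gen]

lemma IsComplex.gen_subset {C S : Finset (Finset V)} (hC : IsComplex C) (hS : S ⊆ C) :
    gen S ⊆ C := fun G hG => by
  obtain ⟨s, hs, hGs⟩ := mem_gen.mp hG
  exact hC s (hS hs) G hGs

lemma exists_isFacet_superset {C : Finset (Finset V)} {G : Finset V} (hG : G ∈ C) :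
    ∃ M, G ⊆ M ∧ IsFacet C M := by
  obtain ⟨M, hM, hmax⟩ := exists_max_image (C.filter (G ⊆ ·)) card ⟨G, by simp [hG]⟩
  rw [mem_filter] at hM
  refine ⟨M, hM.2, hM.1, fun N hN hMN => ?_⟩
  exact eq_of_subset_of_card_le hMN (hmax N (mem_filter.mpr ⟨hN, hM.2.trans hMN⟩))

lemma subset_gen_of_isFacet {C S : Finset (Finset V)} (hS : ∀ M, IsFacet C M → M ∈ S) :
    C ⊆ gen S := fun G hG => by
  obtain ⟨M, hGM, hM⟩ := exists_isFacet_superset hG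
  exact mem_gen.mpr ⟨M, hS M hM, hGM⟩

lemma gen_mono {S T : Finset (Finset V)} (h : S ⊆ T) : gen S ⊆ gen T :=
  biUnion_subset_biUnion_of_subset_left _ h

lemma isPure_gen {S : Finset (Finset V)} {d : ℕ} (hS : ∀ s ∈ S, s.card = d + 1) :
    IsPure (gen S) d := by
  rintro M ⟨hM, hmax⟩
  obtain ⟨s, hs, hMs⟩ := mem_gen.mp hM
  rw [hmax s (mem_gen.mpr ⟨s, hs, subset_rfl⟩) hMs]
  exact hS s hs

def IsDecompOrdering (k : ℕ) (C : Finset (Finset V)) (L : List (Finset V)) : Prop :=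
  L.Nodup ∧ (∀ F, IsFacet C F ↔ F ∈ L) ∧
    ∀ i, 1 ≤ i → i ≤ L.length → Decomp k (gen (L.take i).toFinset)

lemma isDecompOrdering_singleton (k : ℕ) (F : Finset V) :
    IsDecompOrdering k F.powerset [F] := by
  refine ⟨List.nodup_singleton F, fun G => ?_, fun i hi hle => ?_⟩
  · simp only [IsFacet, List.mem_singleton, mem_powerset]
    exact ⟨fun ⟨hGF, hmax⟩ => hmax F subset_rfl hGF,
      fun h => ⟨h.subset, fun _ hHF hGH => hGH.antisymm (h ▸ hHF)⟩⟩
  · obtain rfl : i = 1 := le_antisymm hle hi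
    exact Decomp.simplex k _ ⟨F, by simp [gen]⟩

section

variable {C : Finset (Finset V)} {F G H : Finset V}

lemma isComplex_del (hC : IsComplex C) : IsComplex (del C F) := by
  intro G hG H hHG
  simp only [del, mem_filter] at hG ⊢
  exact ⟨hC G hG.1 H hHG, fun hFH => hG.2 (hFH.trans hHG)⟩

lemma isComplex_lk (hC : IsComplex C) : IsComplex (lk C F) := by
  intro G hG H hHG
  simp only [lk, mem_filter] at hG ⊢
  refine ⟨hC G hG.1 H hHG, subset_empty.mp ?_,
    hC _ hG.2.2 _ (union_subset_union hHG subset_rfl)⟩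
  exact hG.2.1 ▸ inter_subset_inter hHG subset_rfl

lemma mem_lk_iff (hC : IsComplex C) : H ∈ lk C F ↔ Disjoint H F ∧ H ∪ F ∈ C := by
  rw [lk, mem_filter, ← disjoint_iff_inter_eq_empty]
  exact ⟨fun h => h.2, fun h => ⟨hC _ h.2 H subset_union_left, h⟩⟩

lemma isFacet_lk_iff (hC : IsComplex C) :
    IsFacet (lk C F) H ↔ Disjoint H F ∧ IsFacet C (H ∪ F) := by
  simp only [IsFacet, mem_lk_iff hC]
  constructor
  · rintro ⟨⟨hHF, hHFC⟩, hmax⟩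
    refine ⟨hHF, hHFC, fun G hG hHFG => ?_⟩
    have hFG : F ⊆ G := subset_union_right.trans hHFG
    have hH : H = G \ F := hmax (G \ F)
      ⟨sdiff_disjoint, by rwa [sdiff_union_of_subset hFG]⟩
      (subset_sdiff.mpr ⟨subset_union_left.trans hHFG, hHF⟩)
    rw [hH, sdiff_union_of_subset hFG]
  · rintro ⟨hHF, hHFC, hmax⟩
    refine ⟨⟨hHF, hHFC⟩, fun G ⟨hGF, hGFC⟩ hHG => ?_⟩
    have h := hmax (G ∪ F) hGFC (union_subset_union hHG subset_rfl)
    rw [← union_sdiff_cancel_right hHF, h, union_sdiff_cancel_right hGF]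

lemma isFacet_del_iff {d : ℕ} (hPC : IsPure C d) (hPdel : IsPure (del C F) d) :
    IsFacet (del C F) G ↔ IsFacet C G ∧ ¬ F ⊆ G := by
  constructor
  · intro hG
    obtain ⟨hGC, hFG⟩ := mem_filter.mp hG.1
    refine ⟨⟨hGC, fun N hN hGN => ?_⟩, hFG⟩
    obtain ⟨M, hNM, hM⟩ := exists_isFacet_superset hN
    have hGM : G = M := eq_of_subset_of_card_le (hGN.trans hNM) (by rw [hPdel G hG, hPC M hM])
    exact hGN.antisymm (hGM ▸ hNM)
  · rintro ⟨⟨hGC, hmax⟩, hFG⟩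
    exact ⟨mem_filter.mpr ⟨hGC, hFG⟩, fun N hN => hmax N (mem_filter.mp hN).1⟩

lemma isFacet_iff_del_or_lk {d : ℕ} (hC : IsComplex C) (hPC : IsPure C d)
    (hPdel : IsPure (del C F) d) :
    IsFacet C G ↔ IsFacet (del C F) G ∨ ∃ H, IsFacet (lk C F) H ∧ H ∪ F = G := by
  simp only [isFacet_del_iff hPC hPdel, isFacet_lk_iff hC]
  constructor
  · intro hG
    by_cases hFG : F ⊆ G
    · exact Or.inr ⟨G \ F, ⟨sdiff_disjoint, by rwa [sdiff_union_of_subset hFG]⟩,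
        sdiff_union_of_subset hFG⟩
    · exact Or.inl ⟨hG, hFG⟩
  · rintro (⟨hG, -⟩ | ⟨H, ⟨-, hH⟩, rfl⟩)
    exacts [hG, hH]

lemma mem_lk_gen {S : Finset (Finset V)} :
    G ∈ lk (gen S) F ↔ ∃ s ∈ S, F ⊆ s ∧ G ⊆ s \ F := by
  simp only [lk, mem_filter, mem_gen, ← disjoint_iff_inter_eq_empty, subset_sdiff]
  constructor
  · rintro ⟨-, hGF, s, hs, hGFs⟩
    exact ⟨s, hs, subset_union_right.trans hGFs, subset_union_left.trans hGFs, hGF⟩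
  · rintro ⟨s, hs, hFs, hGs, hGF⟩
    exact ⟨⟨s, hs, hGs⟩, hGF, s, hs, union_subset hGs hFs⟩

lemma lk_gen_union_image {A B : Finset (Finset V)} (hA : ∀ a ∈ A, ¬ F ⊆ a)
    (hB : ∀ b ∈ B, Disjoint b F) : lk (gen (A ∪ B.image (· ∪ F))) F = gen B := by
  ext G
  rw [mem_lk_gen, mem_gen]
  constructor
  · rintro ⟨s, hs, hFs, hGs⟩
    rcases mem_union.mp hs with hsA | hsB
    · exact absurd hFs (hA s hsA)
    · obtain ⟨b, hb, rfl⟩ := mem_image.mp hsB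
      exact ⟨b, hb, union_sdiff_cancel_right (hB b hb) ▸ hGs⟩
  · rintro ⟨b, hb, hGb⟩
    refine ⟨b ∪ F, mem_union_right _ (mem_image_of_mem _ hb), subset_union_right, ?_⟩
    rwa [union_sdiff_cancel_right (hB b hb)]

/-- `F` remains a shedding face of the enlarged complex. -/
lemma decomp_gen_union_image {k d : ℕ} {A B : Finset (Finset V)} (hC : IsComplex C)
    (hFne : F.Nonempty) (hFcard : F.card ≤ k + 1) (hPC : IsPure C d)
    (hPdel : IsPure (del C F) d) (hDdel : Decomp k (del C F))
    (hA : ∀ G, G ∈ A ↔ IsFacet (del C F) G) (hB : ∀ b ∈ B, IsFacet (lk C F) b)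
    (hBne : B.Nonempty) (hDB : Decomp k (gen B)) :
    Decomp k (gen (A ∪ B.image (· ∪ F))) := by
  have hAC : ∀ a ∈ A, IsFacet C a ∧ ¬ F ⊆ a := fun a ha =>
    (isFacet_del_iff hPC hPdel).mp ((hA a).mp ha)
  have hBC : ∀ b ∈ B, Disjoint b F ∧ IsFacet C (b ∪ F) := fun b hb =>
    (isFacet_lk_iff hC).mp (hB b hb)
  have hgen : ∀ s ∈ A ∪ B.image (· ∪ F), IsFacet C s := by
    intro s hs
    rcases mem_union.mp hs with hsA | hsB
    · exact (hAC s hsA).1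
    · obtain ⟨b, hb, rfl⟩ := mem_image.mp hsB
      exact (hBC b hb).2
  set D := gen (A ∪ B.image (· ∪ F))
  have hDC : D ⊆ C := hC.gen_subset fun s hs => (hgen s hs).1
  have hdel : del D F = del C F := by
    refine (filter_subset_filter _ hDC).antisymm fun G hG => ?_
    have hGA : G ∈ gen A := subset_gen_of_isFacet (fun M hM => (hA M).mpr hM) hG
    exact mem_filter.mpr ⟨gen_mono subset_union_left hGA, (mem_filter.mp hG).2⟩
  obtain ⟨b, hb⟩ := hBne
  have hFD : F ∈ D := mem_gen.mpr ⟨b ∪ F, mem_union_right _ (mem_image_of_mem _ hb),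
    subset_union_right⟩
  refine Decomp.shed k D F d hFD hFne hFcard (isPure_gen fun s hs => hPC s (hgen s hs))
    (hdel ▸ hPdel) (hdel ▸ hDdel) ?_
  rwa [lk_gen_union_image (fun a ha => (hAC a ha).2) fun b hb => (hBC b hb).1]

lemma IsDecompOrdering.append_map_union {k d : ℕ} {L₁ L₂ : List (Finset V)}
    (hC : IsComplex C) (hFne : F.Nonempty) (hFcard : F.card ≤ k + 1) (hPC : IsPure C d)
    (hPdel : IsPure (del C F) d) (hDdel : Decomp k (del C F))
    (h₁ : IsDecompOrdering k (del C F) L₁) (h₂ : IsDecompOrdering k (lk C F) L₂) :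
    IsDecompOrdering k C (L₁ ++ L₂.map (· ∪ F)) := by
  obtain ⟨hN₁, hL₁, hD₁⟩ := h₁
  obtain ⟨hN₂, hL₂, hD₂⟩ := h₂
  have hdisj : ∀ H ∈ L₂, Disjoint H F := fun H hH =>
    ((isFacet_lk_iff hC).mp ((hL₂ H).mpr hH)).1
  refine ⟨?_, fun G => ?_, fun i hi hle => ?_⟩
  · rw [List.nodup_append]
    refine ⟨hN₁, hN₂.map_on fun H₁ h₁ H₂ h₂ he => ?_, ?_⟩
    · rw [← union_sdiff_cancel_right (hdisj H₁ h₁), he,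
        union_sdiff_cancel_right (hdisj H₂ h₂)]
    · rintro G hG _ hG' rfl
      obtain ⟨H, -, rfl⟩ := List.mem_map.mp hG'
      exact ((isFacet_del_iff hPC hPdel).mp ((hL₁ _).mpr hG)).2 subset_union_right
  · simp only [isFacet_iff_del_or_lk hC hPC hPdel, hL₁, hL₂, List.mem_append, List.mem_map]
  rcases le_or_gt i L₁.length with hi₁ | hi₁
  · rw [List.take_append_of_le_length hi₁]
    exact hD₁ i hi hi₁
  obtain ⟨j, rfl⟩ : ∃ j, i = L₁.length + j := ⟨i - L₁.length, by omega⟩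
  have hj : j ≤ L₂.length := by simpa using hle
  rw [List.take_append, List.take_of_length_le (by omega), Nat.add_sub_cancel_left,
    List.toFinset_append, ← List.map_take, List.toFinset_map]
  refine decomp_gen_union_image hC hFne hFcard hPC hPdel hDdel
    (fun G => by rw [List.mem_toFinset, hL₁])
    (fun b hb => (hL₂ b).mpr (List.mem_of_mem_take (List.mem_toFinset.mp hb))) ?_
    (hD₂ j (by omega) hj)
  exact (List.toFinset_nonempty_iff _).mpr (List.ne_nil_of_length_pos (by simp; omega))

end

lemma Decomp.exists_isDecompOrdering {k : ℕ} {C : Finset (Finset V)} (hD : Decomp k C)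
    (hC : IsComplex C) : ∃ L, IsDecompOrdering k C L := by
  induction hD with
  | simplex C hS =>
    obtain ⟨F, rfl⟩ := hS
    exact ⟨[F], isDecompOrdering_singleton k F⟩
  | shed C F d _ hFne hFcard hPC hPdel hDdel _ ihdel ihlk =>
    obtain ⟨L₁, h₁⟩ := ihdel (isComplex_del hC)
    obtain ⟨L₂, h₂⟩ := ihlk (isComplex_lk hC)
    exact ⟨_, h₁.append_map_union hC hFne hFcard hPC hPdel hDdel h₂⟩

theorem facet_ordering_general (C : Finset (Finset V)) (k : ℕ)
    (hC : IsComplex C) (hD : Decomp k C) :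
    ∃ L : List (Finset V), L.Nodup ∧ (∀ F : Finset V, IsFacet C F ↔ F ∈ L) ∧
      ∀ i : ℕ, 1 ≤ i → i ≤ L.length → Decomp k (gen (L.take i).toFinset) :=
  hD.exists_isDecompOrdering hC

/-- The facets of a pure `k`-decomposable complex can be ordered so that every
initial segment generates a `k`-decomposable complex. -/
theorem facet_ordering (C : Finset (Finset V)) (d k : ℕ)
    (hC : IsComplex C) (hP : IsPure C d) (hD : Decomp k C) :
    ∃ L : List (Finset V), L.Nodup ∧ (∀ F : Finset V, IsFacet C F ↔ F ∈ L) ∧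
      ∀ i : ℕ, 1 ≤ i → i ≤ L.length → Decomp k (gen (L.take i).toFinset) :=
  facet_ordering_general C k hC hD
end

section
/- Let C be a pure 2-dimensional 1-decomposable simplicial complex, and suppose e = {a,b} is a pair of vertices not forming an edge of skel(C) such that adding e to skel(C) creates a 3-clique {a,b,c} (i.e., {a,c} and {b,c} are edges of skel(C)). Then the complex C + ⟨{a,b,c}⟩ obtained by adding the facet {a,b,c} is 1-decomposable, with e as a shedding face, and its 1-skeleton is skel(C) together with the edge e. -/
open Finset

variable {V : Type*} [DecidableEq V]

/-!
The triangle `T = {a,b,c}` meets `C` in every face not containing `{a,b}`, because `{a,c}` and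
`{b,c}` are edges of `C`. Hence deleting `{a,b}` from `C + T` gives back `C`, while the link of
`{a,b}` is the simplex on `T \ {a,b} = {c}`; so `{a,b}` is a shedding face and the only new edge.
-/

section AddFacet

variable {C : Finset (Finset V)} {F T : Finset V} {d k : ℕ}

theorem del_union_powerset (hC : IsComplex C) (hF : F ∉ C) (hT : ∀ G ⊆ T, ¬ F ⊆ G → G ∈ C) :
    del (C ∪ T.powerset) F = C := by
  ext G
  simp only [del, mem_filter, mem_union, mem_powerset]
  constructor
  · rintro ⟨hG | hG, hFG⟩
    exacts [hG, hT G hG hFG]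
  · exact fun hG => ⟨Or.inl hG, fun hFG => hF (hC G hG F hFG)⟩

theorem lk_union_powerset (hC : IsComplex C) (hF : F ∉ C) (hFT : F ⊆ T) :
    lk (C ∪ T.powerset) F = (T \ F).powerset := by
  ext G
  simp only [lk, mem_filter, mem_union, mem_powerset, subset_sdiff,
    disjoint_iff_inter_eq_empty]
  constructor
  · rintro ⟨-, hGF, hGFC | hGFT⟩
    · exact absurd (hC _ hGFC F subset_union_right) hF
    · exact ⟨subset_union_left.trans hGFT, hGF⟩
  · rintro ⟨hGT, hGF⟩
    exact ⟨Or.inr hGT, hGF, Or.inr (union_subset hGT hFT)⟩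

theorem IsPure.union_powerset (hP : IsPure C d) (hT : T.card = d + 1) :
    IsPure (C ∪ T.powerset) d := by
  rintro F ⟨hF, hmax⟩
  rcases mem_union.1 hF with hFC | hFT
  · exact hP F ⟨hFC, fun G hG => hmax G (mem_union_left _ hG)⟩
  · rw [hmax T (mem_union_right _ (mem_powerset_self T)) (mem_powerset.1 hFT), hT]

theorem decomp_union_powerset (hC : IsComplex C) (hP : IsPure C d) (hD : Decomp k C)
    (hF : F ∉ C) (hFne : F.Nonempty) (hFk : F.card ≤ k + 1) (hFT : F ⊆ T)
    (hTd : T.card = d + 1) (hT : ∀ G ⊆ T, ¬ F ⊆ G → G ∈ C) :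
    Decomp k (C ∪ T.powerset) ∧ Shedding (C ∪ T.powerset) d F := by
  have hdel := del_union_powerset hC hF hT
  have hFmem : F ∈ C ∪ T.powerset := mem_union_right _ (mem_powerset.2 hFT)
  refine ⟨.shed k _ F d hFmem hFne hFk (hP.union_powerset hTd) (by rwa [hdel]) (by rwa [hdel])
    ?_, hFmem, by rwa [hdel]⟩
  rw [lk_union_powerset hC hF hFT]
  exact .simplex k _ ⟨_, rfl⟩

theorem skel_union_powerset_adj (hFT : F ⊆ T) (hF : F.card = 2)
    (hT : ∀ G ⊆ T, ¬ F ⊆ G → G ∈ C) (x y : V) :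
    (skel (C ∪ T.powerset)).Adj x y ↔ (skel C).Adj x y ∨ (x ≠ y ∧ ({x, y} : Finset V) = F) := by
  constructor
  · rintro ⟨hxy, hxy'⟩
    rcases mem_union.1 hxy' with hxyC | hxyT
    · exact .inl ⟨hxy, hxyC⟩
    by_cases hFxy : F ⊆ {x, y}
    · exact .inr ⟨hxy, (eq_of_subset_of_card_le hFxy (hF ▸ card_le_two)).symm⟩
    · exact .inl ⟨hxy, hT _ (mem_powerset.1 hxyT) hFxy⟩
  · rintro (⟨hxy, hxyC⟩ | ⟨hxy, rfl⟩)
    · exact ⟨hxy, mem_union_left _ hxyC⟩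
    · exact ⟨hxy, mem_union_right _ (mem_powerset.2 hFT)⟩

theorem mem_of_subset_triangle (hC : IsComplex C) {a b c : V} (hac : {a, c} ∈ C)
    (hbc : {b, c} ∈ C) : ∀ G ⊆ ({a, b, c} : Finset V), ¬ {a, b} ⊆ G → G ∈ C := by
  intro G hG hab
  by_cases ha : a ∈ G
  · have hb : b ∉ G := fun hb => hab (insert_subset ha (singleton_subset_iff.2 hb))
    refine hC _ hac _ fun x hx => ?_
    have := hG hx
    simp only [mem_insert, mem_singleton] at this ⊢
    grind
  · refine hC _ hbc _ fun x hx => ?_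
    have := hG hx
    simp only [mem_insert, mem_singleton] at this ⊢
    grind

end AddFacet

/-- Adding a facet `{a,b,c}` along a missing edge `{a,b}` of a triangle keeps a pure
2-dimensional complex 1-decomposable, with `{a,b}` as shedding face, and adds
exactly the edge `{a,b}` to the skeleton. -/
theorem two_dim_missing_edge (C : Finset (Finset V)) (a b c : V)
    (hC : IsComplex C) (hP : IsPure C 2) (hD : Decomp 1 C) (hab : a ≠ b)
    (hnot : ¬ (skel C).Adj a b) (hac : (skel C).Adj a c) (hbc : (skel C).Adj b c) :
    Decomp 1 (C ∪ ({a, b, c} : Finset V).powerset) ∧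
    Shedding (C ∪ ({a, b, c} : Finset V).powerset) 2 {a, b} ∧
    ∀ x y : V, (skel (C ∪ ({a, b, c} : Finset V).powerset)).Adj x y ↔
      ((skel C).Adj x y ∨ (x ≠ y ∧ ({x, y} : Finset V) = {a, b})) := by
  have hT := mem_of_subset_triangle hC hac.2 hbc.2
  have habT : ({a, b} : Finset V) ⊆ {a, b, c} :=
    insert_subset_insert a (singleton_subset_iff.2 (mem_insert_self b {c}))
  have hcard : ({a, b, c} : Finset V).card = 3 := card_eq_three.2 ⟨a, b, c, hab, hac.1, hbc.1, rfl⟩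
  obtain ⟨hDec, hShed⟩ := decomp_union_powerset hC hP hD (fun h => hnot ⟨hab, h⟩)
    (insert_nonempty a {b}) (card_pair hab).le habT hcard hT
  exact ⟨hDec, hShed, skel_union_powerset_adj habT (card_pair hab) hT⟩
end
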